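/- Assume the outside option setup (𝒜_N = {a₀}) and the full domain 𝒟 = 2^𝒜 ∖ {∅}. A stochastic choice function ρ satisfies Limited Monotonicity and partial RU-rationality if and only if ρ lies in the convex hull of {ρ^≻_𝓔 : ≻ a linear order on 𝒜, 𝓔 ⊆ 𝒟}. -/

import Mathlib

open Finset

noncomputable section

/-- A ranking (strict linear order) on a finite type `T`, encoded as a bijection with
`Fin (Fintype.card T)`; a lower index means a better alternative. -/
abbrev Ranking (T : Type) [Fintype T] : Type := T ≃ Fin (Fintype.card T)

/-- `x` is strictly preferred to `y` according to the ranking `r`. -/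
def Ranking.pref {T : Type} [Fintype T] (r : Ranking T) (x y : T) : Prop :=
  r x < r y

/-- The `r`-best (most preferred) element of a nonempty finite set `D`. -/
def Ranking.best {T : Type} [Fintype T] [DecidableEq T] (r : Ranking T) (D : Finset T)
    (hD : D.Nonempty) : T :=
  r.symm ((D.image fun x => r x).min' (hD.image fun x => r x))

/-- `μ` is a probability distribution on the finite type `T`. -/
def IsDistr {T : Type} [Fintype T] (μ : T → ℝ) : Prop :=
  (∀ t, 0 ≤ μ t) ∧ (∑ t, μ t) = 1

open Classical in
/-- The probability of the event `P` under the distribution `μ`. -/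
def probOf {T : Type} [Fintype T] (μ : T → ℝ) (P : T → Prop) : ℝ :=
  ∑ t, if P t then μ t else 0

/-- `ρ` is a stochastic choice function on the domain `𝒟`: on every menu of the domain it is
nonnegative, sums to one over the menu, and vanishes outside the menu. -/
def IsSCF {A : Type} [Fintype A] [DecidableEq A] (𝒟 : Finset (Finset A))
    (ρ : Finset A → A → ℝ) : Prop :=
  ∀ B ∈ 𝒟, (∀ a ∈ B, 0 ≤ ρ B a) ∧ ((∑ a ∈ B, ρ B a) = 1) ∧ (∀ a ∉ B, ρ B a = 0)

/-- An aggregation correspondence for the set `AN` of non-atomic aggregates: pairwise disjoint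
nonempty sets of underlying alternatives, singletons exactly on atomic aggregates. -/
structure AggCorr (A 𝒳 : Type) [Fintype A] [DecidableEq A] [Fintype 𝒳] [DecidableEq 𝒳]
    (AN : Finset A) where
  X : A → Finset 𝒳
  disj : ∀ a b, a ≠ b → Disjoint (X a) (X b)
  atomic : ∀ a ∉ AN, (X a).card = 1
  nonatomic : ∀ a ∈ AN, 2 ≤ (X a).card

/-- `lam` is a composition distribution for the aggregation correspondence `Xc` on the domain
`𝒟`: for every menu `B ∈ 𝒟` it is a probability distribution over profiles `S` of nonempty
subsets `S a ⊆ X a`. -/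
def IsCompDistr {A 𝒳 : Type} [Fintype A] [DecidableEq A] [Fintype 𝒳] [DecidableEq 𝒳]
    {AN : Finset A} (Xc : AggCorr A 𝒳 AN) (𝒟 : Finset (Finset A))
    (lam : Finset A → (A → Finset 𝒳) → ℝ) : Prop :=
  ∀ B ∈ 𝒟, IsDistr (lam B) ∧
    ∀ S : A → Finset 𝒳, lam B S ≠ 0 → ∀ a, S a ⊆ Xc.X a ∧ (S a).Nonempty

/-- The pair `(μ, lam)` (for the aggregation correspondence `Xc`) rationalizes `ρ` on `𝒟`. -/
def Rationalizes {A 𝒳 : Type} [Fintype A] [DecidableEq A] [Fintype 𝒳] [DecidableEq 𝒳]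
    {AN : Finset A} (Xc : AggCorr A 𝒳 AN) (𝒟 : Finset (Finset A))
    (μ : Ranking 𝒳 → ℝ) (lam : Finset A → (A → Finset 𝒳) → ℝ)
    (ρ : Finset A → A → ℝ) : Prop :=
  IsDistr μ ∧ IsCompDistr Xc 𝒟 lam ∧
    ∀ B ∈ 𝒟, ∀ a ∈ B,
      ρ B a = ∑ S : A → Finset 𝒳, lam B S *
        probOf μ (fun r => ∃ x ∈ S a, ∀ b ∈ B, b ≠ a → ∀ y ∈ S b, Ranking.pref r x y)

/-- RU-rationality: some pair `(μ, lam)` for some aggregation correspondence with underlying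
alternatives `𝒳` and non-atomic aggregates `AN` rationalizes `ρ`. -/
def RURational (𝒳 : Type) [Fintype 𝒳] [DecidableEq 𝒳] {A : Type} [Fintype A] [DecidableEq A]
    (AN : Finset A) (𝒟 : Finset (Finset A)) (ρ : Finset A → A → ℝ) : Prop :=
  ∃ Xc : AggCorr A 𝒳 AN, ∃ μ lam, Rationalizes Xc 𝒟 μ lam ρ

/-- ARU-rationality: `ρ` is a random utility model over the aggregates themselves. -/
def ARURational {A : Type} [Fintype A] [DecidableEq A]
    (𝒟 : Finset (Finset A)) (ρ : Finset A → A → ℝ) : Prop :=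
  ∃ μA : Ranking A → ℝ, IsDistr μA ∧
    ∀ B ∈ 𝒟, ∀ a ∈ B, ρ B a = probOf μA (fun r => ∀ b ∈ B, b ≠ a → Ranking.pref r a b)

/-- Partial RU-rationality: on menus of atomic aggregates only, `ρ` is a random utility model
over linear orders on the atomic aggregates `AA`. -/
def PartialRURational {A : Type} [Fintype A] [DecidableEq A]
    (AA : Finset A) (𝒟 : Finset (Finset A)) (ρ : Finset A → A → ℝ) : Prop :=
  ∃ ν : Ranking {c : A // c ∈ AA} → ℝ, IsDistr ν ∧
    ∀ B ∈ 𝒟, ∀ (hB : B ⊆ AA), ∀ a, ∀ (ha : a ∈ B),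
      ρ B a = probOf ν (fun r =>
        ∀ b : {c : A // c ∈ AA}, (b : A) ∈ B → (b : A) ≠ a → Ranking.pref r ⟨a, hB ha⟩ b)

/-- Limited Monotonicity (outside-option form): adding the outside option `a0` to a menu of
atomic aggregates weakly decreases every atomic choice frequency. -/
def LimitedMono {A : Type} [Fintype A] [DecidableEq A]
    (a0 : A) (AA : Finset A) (𝒟 : Finset (Finset A)) (ρ : Finset A → A → ℝ) : Prop :=
  ∀ D : Finset A, D ⊆ AA → D ∈ 𝒟 → insert a0 D ∈ 𝒟 →
    ∀ b ∈ D, ρ (insert a0 D) b ≤ ρ D b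

/-- Limited Monotonicity (general form): adding any set `E` of non-atomic aggregates to a menu
of atomic aggregates weakly decreases every atomic choice frequency. -/
def LimitedMonoGen {A : Type} [Fintype A] [DecidableEq A]
    (AA AN : Finset A) (𝒟 : Finset (Finset A)) (ρ : Finset A → A → ℝ) : Prop :=
  ∀ D E : Finset A, D ⊆ AA → E ⊆ AN → D ∈ 𝒟 → D ∪ E ∈ 𝒟 →
    ∀ b ∈ D, ρ (D ∪ E) b ≤ ρ D b

/-- The full domain: all nonempty subsets of `A`. -/
def fullDomain (A : Type) [Fintype A] [DecidableEq A] : Finset (Finset A) :=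
  Finset.univ.filter fun D => D.Nonempty

/-- The deterministic "menu-effect" stochastic choice function `ρ^≻_𝓔`: it puts probability 1
on the `r`-maximum of `D` if `a0 ∉ D` or `D ∈ E`, and probability 1 on `a0` otherwise. -/
def vertexSCF {A : Type} [Fintype A] [DecidableEq A]
    (a0 : A) (r : Ranking A) (E : Finset (Finset A)) : Finset A → A → ℝ :=
  fun D a =>
    if h : D.Nonempty then
      if a0 ∉ D ∨ D ∈ E then (if a = Ranking.best r D h then 1 else 0)
      else (if a = a0 then 1 else 0)
    else 0

open Classical in
/-- The deterministic menu-effect stochastic choice function with multiple non-atomic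
aggregates: on a menu `D` belonging to `E b` (for the necessarily unique such `b`, the
collections being pairwise disjoint) it puts probability 1 on `b`; otherwise it puts
probability 1 on the `r`-maximum of `D`. -/
def vertexSCFM {A : Type} [Fintype A] [DecidableEq A]
    (r : Ranking A) (E : A → Finset (Finset A)) : Finset A → A → ℝ :=
  fun D a =>
    if h : D.Nonempty then
      if hex : ∃ b, D ∈ E b then (if a = Classical.choose hex then 1 else 0)
      else (if a = Ranking.best r D h then 1 else 0)
    else 0

/-- Restriction of a choice function to the coordinates `(D, a)` with `D ∈ 𝒟`, viewed as a
vector in `ℝ^(Finset A × A)`. -/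
def restrictTo {A : Type} [Fintype A] [DecidableEq A] (𝒟 : Finset (Finset A))
    (ρ : Finset A → A → ℝ) : Finset A × A → ℝ :=
  fun p => if p.1 ∈ 𝒟 then ρ p.1 p.2 else 0

/-- `RU(n)` (outside-option setup): `ρ` is rationalized by some pair whose aggregation
correspondence satisfies `|X(a0)| = n`. -/
def RUn (𝒳 : Type) [Fintype 𝒳] [DecidableEq 𝒳] {A : Type} [Fintype A] [DecidableEq A]
    (a0 : A) (𝒟 : Finset (Finset A)) (n : ℕ) (ρ : Finset A → A → ℝ) : Prop :=
  ∃ Xc : AggCorr A 𝒳 ({a0} : Finset A), (Xc.X a0).card = n ∧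
    ∃ μ lam, Rationalizes Xc 𝒟 μ lam ρ

/-- `RU((n_a))`: `ρ` is rationalized by some pair whose aggregation correspondence satisfies
`|X(a)| = nv a` for every non-atomic aggregate `a`. -/
def RUvec (𝒳 : Type) [Fintype 𝒳] [DecidableEq 𝒳] {A : Type} [Fintype A] [DecidableEq A]
    (AN : Finset A) (𝒟 : Finset (Finset A)) (nv : A → ℕ) (ρ : Finset A → A → ℝ) : Prop :=
  ∃ Xc : AggCorr A 𝒳 AN, (∀ a ∈ AN, (Xc.X a).card = nv a) ∧
    ∃ μ lam, Rationalizes Xc 𝒟 μ lam ρ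

/-- `μ` is non-overlapping for `Xc`: in every ranking in the support of `μ`, the underlying
alternatives of each non-atomic aggregate occupy adjacent positions. -/
def NonOverlapping {A 𝒳 : Type} [Fintype A] [DecidableEq A] [Fintype 𝒳] [DecidableEq 𝒳]
    {AN : Finset A} (Xc : AggCorr A 𝒳 AN) (μ : Ranking 𝒳 → ℝ) : Prop :=
  ∀ r : Ranking 𝒳, μ r ≠ 0 → ∀ a ∈ AN, ∀ y ∈ Xc.X a, ∀ z ∈ Xc.X a, ∀ x : 𝒳,
    Ranking.pref r y x → Ranking.pref r x z → x ∈ Xc.X a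

/-- `lam` is menu-independent: there is a single (unconditional) probability distribution over
full profiles whose marginal on the coordinates of each menu `B ∈ 𝒟` coincides with `lam B`. -/
def MenuIndependent {A 𝒳 : Type} [Fintype A] [DecidableEq A] [Fintype 𝒳] [DecidableEq 𝒳]
    {AN : Finset A} (Xc : AggCorr A 𝒳 AN) (𝒟 : Finset (Finset A))
    (lam : Finset A → (A → Finset 𝒳) → ℝ) : Prop :=
  ∃ lamBar : (A → Finset 𝒳) → ℝ, IsDistr lamBar ∧
    (∀ S : A → Finset 𝒳, lamBar S ≠ 0 → ∀ a, S a ⊆ Xc.X a ∧ (S a).Nonempty) ∧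
    ∀ B ∈ 𝒟, ∀ S0 : A → Finset 𝒳,
      probOf (lam B) (fun S => ∀ b ∈ B, S b = S0 b)
        = probOf lamBar (fun S => ∀ b ∈ B, S b = S0 b)

/-- Squared Euclidean distance between two stochastic choice functions on the coordinates of
the domain `𝒟`. -/
def distSq {A : Type} [Fintype A] [DecidableEq A] (𝒟 : Finset (Finset A))
    (ρ ρ' : Finset A → A → ℝ) : ℝ :=
  ∑ B ∈ 𝒟, ∑ a ∈ B, (ρ B a - ρ' B a) ^ 2

/-!
Each `ρ^≻_𝓔` satisfies Limited Monotonicity and is partially RU-rational (take `ν` to be the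
point mass at the restriction of `≻` to the atomic aggregates), and both properties are convex
conditions on the vector `restrictTo 𝒟 ρ`, so they hold on the whole convex hull.

Conversely, let `ν` rationalize `ρ` on atomic menus and extend every ranking `s` of the atomic
aggregates to `𝒜` by ranking `a₀` last. On a menu `D ∋ a₀` whose `s`-best atomic element is `b`,
put `D` into `𝓔` with probability `ρ(D, b) / ρ(D ∖ {a₀}, b)`, which lies in `[0, 1]` by Limited
Monotonicity, independently across menus. Averaging over `ν` and these coins recovers `ρ`. For
fixed `s` the coins are independent, so the averaged choice function lies in the product over
menus of the segments between the two possible rows, and the convex hull of a product is the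
product of the convex hulls.
-/

namespace Ranking

variable {T : Type} [Fintype T]

def ofInjective (f : T → ℕ) (hf : Function.Injective f) : Ranking T :=
  (Equiv.ofBijective (fun x => (⟨f x, mem_image_of_mem f (mem_univ x)⟩ : univ.image f))
      ⟨fun _ _ h => hf (congrArg Subtype.val h), fun ⟨_, hn⟩ => by
        obtain ⟨x, -, rfl⟩ := mem_image.1 hn
        exact ⟨x, rfl⟩⟩).trans
    ((univ.image f).orderIsoOfFin (by rw [card_image_of_injective _ hf, card_univ])).symm.toEquiv

theorem pref_ofInjective {f : T → ℕ} (hf : Function.Injective f) (x y : T) :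
    (ofInjective f hf).pref x y ↔ f x < f y :=
  (OrderIso.lt_iff_lt _).trans Subtype.mk_lt_mk

def restrict (AA : Finset T) (r : Ranking T) : Ranking {c // c ∈ AA} :=
  ofInjective (fun x => (r x : ℕ)) fun _ _ hxy => Subtype.ext (r.injective (Fin.ext hxy))

theorem pref_restrict {AA : Finset T} (r : Ranking T) (x y : {c // c ∈ AA}) :
    (r.restrict AA).pref x y ↔ r.pref x y :=
  pref_ofInjective _ x y

variable [DecidableEq T]

section Best

variable (r : Ranking T) {D : Finset T} (h : D.Nonempty)

theorem best_mem : r.best D h ∈ D := by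
  obtain ⟨x, hx, hrx⟩ := mem_image.1 ((D.image fun x => r x).min'_mem (h.image _))
  rwa [Ranking.best, ← hrx, Equiv.symm_apply_apply]

theorem pref_best {b : T} (hb : b ∈ D) (hne : b ≠ r.best D h) : r.pref (r.best D h) b := by
  refine lt_of_le_of_ne ?_ fun hr => hne (r.injective hr).symm
  rw [Ranking.best, Equiv.apply_symm_apply]
  exact min'_le _ _ (mem_image_of_mem _ hb)

theorem best_eq_iff {a : T} (ha : a ∈ D) : r.best D h = a ↔ ∀ b ∈ D, b ≠ a → r.pref a b := by
  refine ⟨fun hbest b hb hne => hbest ▸ r.pref_best h hb (hbest ▸ hne), fun hpref => ?_⟩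
  by_contra hne
  exact lt_asymm (r.pref_best h ha (Ne.symm hne)) (hpref _ (r.best_mem h) hne)

theorem best_eq_best_erase {a0 : T} (hlast : ∀ x ≠ a0, r.pref x a0)
    (h' : (D.erase a0).Nonempty) : r.best D h = r.best (D.erase a0) h' := by
  have hmem := r.best_mem h'
  rw [r.best_eq_iff h (mem_of_mem_erase hmem)]
  intro b hb hne
  by_cases hb0 : b = a0
  · exact hb0 ▸ hlast _ (ne_of_mem_erase hmem)
  · exact r.pref_best h' (mem_erase.2 ⟨hb0, hb⟩) hne

end Best

variable {AA : Finset T}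

def extend (s : Ranking {c // c ∈ AA}) : Ranking T :=
  ofInjective
    (fun a => if h : a ∈ AA then (s ⟨a, h⟩ : ℕ)
      else Fintype.card {c // c ∈ AA} + Fintype.equivFin T a)
    (by
      intro a b hab
      by_cases ha : a ∈ AA <;> by_cases hb : b ∈ AA <;>
        simp only [ha, hb, dif_pos, dif_neg, not_false_eq_true] at hab
      · exact congrArg Subtype.val (s.injective (Fin.ext hab))
      · have := (s ⟨a, ha⟩).isLt; omega
      · have := (s ⟨b, hb⟩).isLt; omega
      · exact (Fintype.equivFin T).injective (Fin.ext (by omega)))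

theorem pref_extend_of_mem (s : Ranking {c // c ∈ AA}) {a b : T} (ha : a ∈ AA) (hb : b ∈ AA) :
    (extend s).pref a b ↔ s.pref ⟨a, ha⟩ ⟨b, hb⟩ := by
  refine (pref_ofInjective _ a b).trans ?_
  simp only [dif_pos ha, dif_pos hb]
  rfl

theorem pref_extend_of_notMem (s : Ranking {c // c ∈ AA}) {a b : T} (ha : a ∈ AA)
    (hb : b ∉ AA) : (extend s).pref a b := by
  refine (pref_ofInjective _ a b).2 ?_
  simp only [dif_pos ha, dif_neg hb]
  have := (s ⟨a, ha⟩).isLt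
  omega

theorem best_eq_iff_forall_pref_of_pref_iff (s : Ranking {c // c ∈ AA}) (r : Ranking T)
    (hsr : ∀ x y, s.pref x y ↔ r.pref x y) {B : Finset T} (hB : B ⊆ AA) (h : B.Nonempty)
    {a : T} (ha : a ∈ B) :
    r.best B h = a ↔ ∀ b : {c // c ∈ AA}, (b : T) ∈ B → (b : T) ≠ a → s.pref ⟨a, hB ha⟩ b := by
  rw [r.best_eq_iff h ha]
  exact ⟨fun H b hb hne => (hsr _ _).2 (H b hb hne),
    fun H b hb hne => (hsr _ ⟨b, hB hb⟩).1 (H ⟨b, hB hb⟩ hb hne)⟩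

end Ranking

section Distributions

variable {T : Type} [Fintype T]

open Classical in
theorem probOf_dirac [DecidableEq T] (t₀ : T) (P : T → Prop) :
    probOf (fun t => if t = t₀ then 1 else 0) P = if P t₀ then 1 else 0 := by
  rw [probOf, Finset.sum_eq_single t₀ (fun t _ ht => by simp [ht]) (by simp)]
  simp

theorem isDistr_dirac [DecidableEq T] (t₀ : T) :
    IsDistr fun t => if t = t₀ then (1 : ℝ) else 0 :=
  ⟨fun _ => ite_nonneg zero_le_one le_rfl, by simp⟩

theorem probOf_smul_add_smul (μ μ' : T → ℝ) (a b : ℝ) (P : T → Prop) :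
    probOf (a • μ + b • μ') P = a * probOf μ P + b * probOf μ' P := by
  classical
  simp only [probOf, Finset.mul_sum, ← Finset.sum_add_distrib]
  refine Finset.sum_congr rfl fun t _ => ?_
  split_ifs <;> simp

theorem IsDistr.smul_add_smul {μ μ' : T → ℝ} (hμ : IsDistr μ) (hμ' : IsDistr μ') {a b : ℝ}
    (ha : 0 ≤ a) (hb : 0 ≤ b) (hab : a + b = 1) : IsDistr (a • μ + b • μ') := by
  refine ⟨fun t => ?_, ?_⟩
  · simp only [Pi.add_apply, Pi.smul_apply, smul_eq_mul]
    have := hμ.1 t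
    have := hμ'.1 t
    positivity
  · simp [Finset.sum_add_distrib, ← Finset.mul_sum, hμ.2, hμ'.2, hab]

theorem probOf_eq_sum_mul (μ : T → ℝ) (P : T → Prop) [DecidablePred P] :
    probOf μ P = ∑ t, μ t * if P t then 1 else 0 := by
  refine Finset.sum_congr rfl fun t _ => ?_
  split_ifs <;> simp

end Distributions

theorem Finset.eq_of_sum_eq_of_eqOn_erase {ι M : Type} [DecidableEq ι] [AddCommGroup M]
    {s : Finset ι} {i : ι} {f g : ι → M} (hf : ∀ j ∉ s, f j = 0) (hg : ∀ j ∉ s, g j = 0)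
    (hsum : ∑ j ∈ s, f j = ∑ j ∈ s, g j) (h : ∀ j ∈ s.erase i, f j = g j) : f = g := by
  funext j
  by_cases hj : j ∈ s.erase i
  · exact h j hj
  by_cases hjs : j ∈ s
  · obtain rfl : j = i := by simpa [hjs] using hj
    rw [← add_sum_erase s f hjs, ← add_sum_erase s g hjs, sum_congr rfl h] at hsum
    exact add_right_cancel hsum
  · rw [hf j hjs, hg j hjs]

section ChoiceFunctions

variable {A : Type} [Fintype A] [DecidableEq A]

section Restriction

variable {𝒟 : Finset (Finset A)}

def restrictToLinearMap (𝒟 : Finset (Finset A)) :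
    (Finset A → A → ℝ) →ₗ[ℝ] (Finset A × A → ℝ) where
  toFun := restrictTo 𝒟
  map_add' ρ ρ' := by
    funext p
    by_cases hp : p.1 ∈ 𝒟 <;> simp [restrictTo, hp]
  map_smul' c ρ := by
    funext p
    by_cases hp : p.1 ∈ 𝒟 <;> simp [restrictTo, hp]

theorem restrictToLinearMap_apply (ρ : Finset A → A → ℝ) :
    restrictToLinearMap 𝒟 ρ = restrictTo 𝒟 ρ :=
  rfl

theorem restrictTo_apply_of_mem (ρ : Finset A → A → ℝ) {D : Finset A} (hD : D ∈ 𝒟) :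
    (fun a => restrictTo 𝒟 ρ (D, a)) = ρ D :=
  funext fun _ => if_pos hD

theorem restrictTo_congr {ρ ρ' : Finset A → A → ℝ} (h : ∀ D ∈ 𝒟, ρ D = ρ' D) :
    restrictTo 𝒟 ρ = restrictTo 𝒟 ρ' := by
  funext p
  unfold restrictTo
  split_ifs with hp
  · rw [h _ hp]
  · rfl

theorem mem_fullDomain {D : Finset A} : D ∈ fullDomain A ↔ D.Nonempty := by
  simp [fullDomain]

end Restriction

section Properties

variable {AA : Finset A} {𝒟 : Finset (Finset A)}

theorem limitedMono_congr {a0 : A} {ρ ρ' : Finset A → A → ℝ} (h : ∀ D ∈ 𝒟, ρ D = ρ' D) :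
    LimitedMono a0 AA 𝒟 ρ ↔ LimitedMono a0 AA 𝒟 ρ' := by
  unfold LimitedMono
  exact forall_congr' fun D => forall_congr' fun _ => forall_congr' fun hD =>
    forall_congr' fun hD' => by rw [h D hD, h _ hD']

theorem partialRURational_congr {ρ ρ' : Finset A → A → ℝ} (h : ∀ D ∈ 𝒟, ρ D = ρ' D) :
    PartialRURational AA 𝒟 ρ ↔ PartialRURational AA 𝒟 ρ' := by
  unfold PartialRURational
  refine exists_congr fun ν => and_congr_right fun _ => forall₂_congr fun B hB => ?_
  rw [h B hB]

theorem convex_setOf_limitedMono (a0 : A) :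
    Convex ℝ {q : Finset A × A → ℝ | LimitedMono a0 AA 𝒟 fun D a => q (D, a)} := by
  intro x hx y hy s t hs ht _ D hD hD𝒟 hD𝒟' b hb
  simp only [Pi.add_apply, Pi.smul_apply, smul_eq_mul]
  gcongr
  exacts [hx D hD hD𝒟 hD𝒟' b hb, hy D hD hD𝒟 hD𝒟' b hb]

theorem convex_setOf_partialRURational :
    Convex ℝ {q : Finset A × A → ℝ | PartialRURational AA 𝒟 fun D a => q (D, a)} := by
  rintro x ⟨ν, hν, hx⟩ y ⟨ν', hν', hy⟩ s t hs ht hst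
  refine ⟨s • ν + t • ν', hν.smul_add_smul hν' hs ht hst, fun B hB hBA a ha => ?_⟩
  simp only [Pi.add_apply, Pi.smul_apply, smul_eq_mul, probOf_smul_add_smul, hx B hB hBA a ha,
    hy B hB hBA a ha]

theorem PartialRURational.exists_probOf_best_extend {ρ : Finset A → A → ℝ}
    (h : PartialRURational AA 𝒟 ρ) :
    ∃ ν : Ranking {c // c ∈ AA} → ℝ, IsDistr ν ∧ ∀ B ∈ 𝒟, B ⊆ AA → ∀ a (ha : a ∈ B),
      ρ B a = probOf ν fun s => (Ranking.extend s).best B ⟨a, ha⟩ = a := by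
  obtain ⟨ν, hν, hρ⟩ := h
  refine ⟨ν, hν, fun B hB hBA a ha => (hρ B hB hBA a ha).trans ?_⟩
  unfold probOf
  congr! 2 with s
  exact (Ranking.best_eq_iff_forall_pref_of_pref_iff s _
    (fun x y => (Ranking.pref_extend_of_mem s x.2 y.2).symm) hBA _ ha).symm

end Properties

section Vertices

variable {a0 : A} {r : Ranking A} {E : Finset (Finset A)} {D : Finset A}

theorem vertexSCF_of_nonempty (h : D.Nonempty) (a : A) :
    vertexSCF a0 r E D a = if a0 ∉ D ∨ D ∈ E then (if a = r.best D h then 1 else 0)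
      else (if a = a0 then 1 else 0) :=
  dif_pos h

theorem vertexSCF_congr {E' : Finset (Finset A)} (hE : D ∈ E ↔ D ∈ E') :
    vertexSCF a0 r E D = vertexSCF a0 r E' D := by
  unfold vertexSCF
  simp only [hE]

theorem vertexSCF_eq_zero_of_notMem {a : A} (ha : a ∉ D) : vertexSCF a0 r E D a = 0 := by
  by_cases h : D.Nonempty
  · rw [vertexSCF_of_nonempty h]
    have := r.best_mem h
    split_ifs <;> grind
  · simp [vertexSCF, h]

theorem sum_vertexSCF (h : D.Nonempty) : ∑ a ∈ D, vertexSCF a0 r E D a = 1 := by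
  simp only [vertexSCF_of_nonempty h]
  split_ifs with hE
  · simp [r.best_mem h]
  · simpa using (not_or.1 hE).1

theorem vertexSCF_insert_le (ha0 : a0 ∉ D) {b : A} (hb : b ∈ D) :
    vertexSCF a0 r E (insert a0 D) b ≤ vertexSCF a0 r E D b := by
  have hD : D.Nonempty := ⟨b, hb⟩
  have hbest : r.best (insert a0 D) (insert_nonempty a0 D) = b → r.best D hD = b := by
    rw [r.best_eq_iff _ (mem_insert_of_mem hb), r.best_eq_iff hD hb]
    exact fun H c hc => H c (mem_insert_of_mem hc)
  rw [vertexSCF_of_nonempty (insert_nonempty a0 D), vertexSCF_of_nonempty hD]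
  have hb0 : b ≠ a0 := fun h => ha0 (h ▸ hb)
  split_ifs <;> grind

theorem limitedMono_vertexSCF {AA : Finset A} (h0 : a0 ∉ AA) (𝒟 : Finset (Finset A)) :
    LimitedMono a0 AA 𝒟 (vertexSCF a0 r E) :=
  fun _ hD _ _ _ hb => vertexSCF_insert_le (fun h => h0 (hD h)) hb

theorem partialRURational_vertexSCF {AA : Finset A} (h0 : a0 ∉ AA) (𝒟 : Finset (Finset A)) :
    PartialRURational AA 𝒟 (vertexSCF a0 r E) := by
  refine ⟨fun s => if s = r.restrict AA then 1 else 0, isDistr_dirac _, fun B _ hB a ha => ?_⟩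
  rw [probOf_dirac, vertexSCF_of_nonempty ⟨a, ha⟩, if_pos (Or.inl fun h => h0 (hB h)),
    ← Ranking.best_eq_iff_forall_pref_of_pref_iff _ r (Ranking.pref_restrict r) hB ⟨a, ha⟩ ha]
  simp only [eq_comm]

def menuEffectVertices (a0 : A) (𝒟 : Finset (Finset A)) : Set (Finset A × A → ℝ) :=
  {q | ∃ r : Ranking A, ∃ E : Finset (Finset A), E ⊆ 𝒟 ∧ q = restrictTo 𝒟 (vertexSCF a0 r E)}

theorem limitedMono_and_partialRURational_of_mem_convexHull {AA : Finset A} (h0 : a0 ∉ AA)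
    {𝒟 : Finset (Finset A)} {ρ : Finset A → A → ℝ}
    (hρ : restrictTo 𝒟 ρ ∈ convexHull ℝ (menuEffectVertices a0 𝒟)) :
    LimitedMono a0 AA 𝒟 ρ ∧ PartialRURational AA 𝒟 ρ := by
  have hrestrict (ρ : Finset A → A → ℝ) := fun D (hD : D ∈ 𝒟) => restrictTo_apply_of_mem ρ hD
  have hvert : menuEffectVertices a0 𝒟 ⊆
      {q | LimitedMono a0 AA 𝒟 fun D a => q (D, a)} ∩
        {q | PartialRURational AA 𝒟 fun D a => q (D, a)} := by
    rintro _ ⟨r, E, -, rfl⟩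
    exact ⟨(limitedMono_congr (hrestrict _)).2 (limitedMono_vertexSCF h0 𝒟),
      (partialRURational_congr (hrestrict _)).2 (partialRURational_vertexSCF h0 𝒟)⟩
  obtain ⟨hLM, hPRU⟩ := convexHull_min hvert
    ((convex_setOf_limitedMono a0).inter convex_setOf_partialRURational) hρ
  exact ⟨(limitedMono_congr (hrestrict ρ)).1 hLM, (partialRURational_congr (hrestrict ρ)).1 hPRU⟩

end Vertices

section Mixtures

variable {a0 : A} {𝒟 : Finset (Finset A)}

theorem restrictTo_mem_menuEffectVertices {r : Ranking A} {g : Finset A → A → ℝ}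
    (hg : ∀ D, ∃ E, vertexSCF a0 r E D = g D) :
    restrictTo 𝒟 g ∈ menuEffectVertices a0 𝒟 := by
  choose E hE using hg
  refine ⟨r, 𝒟.filter fun D => D ∈ E D, filter_subset _ _, funext fun p => ?_⟩
  unfold restrictTo
  split_ifs with hD
  · rw [← hE, vertexSCF_congr (E' := 𝒟.filter fun D => D ∈ E D) (by simp [hD])]
  · rfl

theorem restrictTo_mem_convexHull_menuEffectVertices {r : Ranking A} {g : Finset A → A → ℝ}
    (hg : ∀ D, g D ∈ convexHull ℝ (Set.range fun E => vertexSCF a0 r E D)) :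
    restrictTo 𝒟 g ∈ convexHull ℝ (menuEffectVertices a0 𝒟) := by
  have hpi := Set.mem_image_of_mem (restrictToLinearMap 𝒟)
    (mem_convexHull_pi (s := Set.univ) fun D _ => hg D)
  rw [LinearMap.image_convexHull] at hpi
  refine convexHull_mono ?_ hpi
  rintro _ ⟨f, hf, rfl⟩
  exact restrictTo_mem_menuEffectVertices fun D => hf D trivial

-- On the menu `D`, `vertexSCF a0 r {D}` is the row with `D ∈ 𝓔` and `vertexSCF a0 r ∅` the one
-- without.
def menuMix (a0 : A) (r : Ranking A) (θ : Finset A → A → ℝ) (D : Finset A) : A → ℝ :=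
  if h : D.Nonempty then
    θ D (r.best D h) • vertexSCF a0 r {D} D + (1 - θ D (r.best D h)) • vertexSCF a0 r ∅ D
  else 0

variable {r : Ranking A} {θ : Finset A → A → ℝ} {D : Finset A}

theorem menuMix_apply (h : D.Nonempty) (a : A) :
    menuMix a0 r θ D a = if a0 ∈ D then
      θ D (r.best D h) * (if a = r.best D h then 1 else 0) +
        (1 - θ D (r.best D h)) * (if a = a0 then 1 else 0)
      else if a = r.best D h then 1 else 0 := by
  rw [menuMix, dif_pos h]
  by_cases h0 : a0 ∈ D
  · simp [vertexSCF_of_nonempty h, h0]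
  · simp only [vertexSCF_of_nonempty h, h0, Pi.add_apply, Pi.smul_apply, smul_eq_mul,
      not_false_eq_true, true_or, if_true, if_false, ← add_mul, add_sub_cancel, one_mul]

theorem menuMix_eq_zero_of_notMem {a : A} (ha : a ∉ D) : menuMix a0 r θ D a = 0 := by
  unfold menuMix
  split_ifs <;> simp [vertexSCF_eq_zero_of_notMem ha]

theorem sum_menuMix (h : D.Nonempty) : ∑ a ∈ D, menuMix a0 r θ D a = 1 := by
  simp [menuMix, h, Finset.sum_add_distrib, ← Finset.mul_sum, sum_vertexSCF h]

theorem restrictTo_menuMix_mem_convexHull (r : Ranking A)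
    (hθ : ∀ D, ∀ b ∈ D, b ≠ a0 → θ D b ∈ Set.Icc 0 1) :
    restrictTo 𝒟 (menuMix a0 r θ) ∈ convexHull ℝ (menuEffectVertices a0 𝒟) := by
  refine restrictTo_mem_convexHull_menuEffectVertices (r := r) fun D => ?_
  by_cases h : D.Nonempty
  · by_cases hb : r.best D h = a0
    · have hrows : vertexSCF a0 r {D} D = vertexSCF a0 r ∅ D := by
        funext a
        simp only [vertexSCF_of_nonempty h, hb]
        split_ifs <;> simp_all
      rw [menuMix, dif_pos h, hrows, ← add_smul, add_sub_cancel, one_smul]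
      exact subset_convexHull ℝ _ ⟨∅, rfl⟩
    · obtain ⟨hθ0, hθ1⟩ := hθ D _ (r.best_mem h) hb
      rw [menuMix, dif_pos h]
      exact segment_subset_convexHull (Set.mem_range_self {D}) (Set.mem_range_self ∅)
        ⟨_, _, hθ0, sub_nonneg.2 hθ1, add_sub_cancel _ _, rfl⟩
  · rw [menuMix, dif_neg h]
    exact subset_convexHull ℝ _ ⟨∅, funext fun _ => dif_neg h⟩

end Mixtures

section Representation

variable {a0 : A} {ρ : Finset A → A → ℝ}

theorem LimitedMono.le_erase (hLM : LimitedMono a0 {a0}ᶜ (fullDomain A) ρ) {D : Finset A}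
    {b : A} (hb : b ∈ D.erase a0) : ρ D b ≤ ρ (D.erase a0) b := by
  by_cases h0 : a0 ∈ D
  · have := hLM (D.erase a0) (fun x hx => by simpa using ne_of_mem_erase hx)
      (mem_fullDomain.2 ⟨b, hb⟩) (by rw [insert_erase h0]; exact mem_fullDomain.2 ⟨a0, h0⟩) b hb
    rwa [insert_erase h0] at this
  · rw [erase_eq_of_notMem h0]

-- The junk value `x / 0 = 0` is harmless: if `ρ (D.erase a0) b = 0`, Limited Monotonicity
-- forces `ρ D b = 0` as well.
def retentionRatio (a0 : A) (ρ : Finset A → A → ℝ) (D : Finset A) (b : A) : ℝ :=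
  ρ D b / ρ (D.erase a0) b

theorem retentionRatio_mem_Icc (hρ : IsSCF (fullDomain A) ρ)
    (hLM : LimitedMono a0 {a0}ᶜ (fullDomain A) ρ) {D : Finset A} {b : A} (hb : b ∈ D)
    (hb0 : b ≠ a0) : retentionRatio a0 ρ D b ∈ Set.Icc 0 1 := by
  have hb' : b ∈ D.erase a0 := mem_erase.2 ⟨hb0, hb⟩
  have hnonneg : 0 ≤ ρ (D.erase a0) b := (hρ _ (mem_fullDomain.2 ⟨b, hb'⟩)).1 b hb'
  exact ⟨div_nonneg ((hρ D (mem_fullDomain.2 ⟨b, hb⟩)).1 b hb) hnonneg,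
    div_le_one_of_le₀ (hLM.le_erase hb') hnonneg⟩

theorem retentionRatio_mul (hρ : IsSCF (fullDomain A) ρ)
    (hLM : LimitedMono a0 {a0}ᶜ (fullDomain A) ρ) {D : Finset A} {b : A} (hb : b ∈ D.erase a0) :
    retentionRatio a0 ρ D b * ρ (D.erase a0) b = ρ D b :=
  div_mul_cancel_of_imp fun h => le_antisymm (h ▸ hLM.le_erase hb)
    ((hρ D (mem_fullDomain.2 ⟨b, mem_of_mem_erase hb⟩)).1 b (mem_of_mem_erase hb))

theorem sum_mul_menuMix_extend_of_mem_erase (hρ : IsSCF (fullDomain A) ρ)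
    (hLM : LimitedMono a0 {a0}ᶜ (fullDomain A) ρ) {ν : Ranking {c // c ∈ ({a0}ᶜ : Finset A)} → ℝ}
    (hν : ∀ B ∈ fullDomain A, B ⊆ {a0}ᶜ → ∀ a (ha : a ∈ B),
      ρ B a = probOf ν fun s => (Ranking.extend s).best B ⟨a, ha⟩ = a)
    {D : Finset A} {a : A} (ha : a ∈ D.erase a0) :
    ∑ s, ν s * menuMix a0 (Ranking.extend s) (retentionRatio a0 ρ) D a = ρ D a := by
  have hD : D.Nonempty := ⟨a, mem_of_mem_erase ha⟩
  have ha0 : a ≠ a0 := ne_of_mem_erase ha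
  have hbest (s : Ranking {c // c ∈ ({a0}ᶜ : Finset A)}) :
      (Ranking.extend s).best D hD = (Ranking.extend s).best (D.erase a0) ⟨a, ha⟩ :=
    Ranking.best_eq_best_erase _ _
      (fun x hx => Ranking.pref_extend_of_notMem s (by simpa using hx) (by simp)) _
  have hprob := hν (D.erase a0) (mem_fullDomain.2 ⟨a, ha⟩)
    (fun x hx => by simpa using ne_of_mem_erase hx) a ha
  rw [probOf_eq_sum_mul] at hprob
  by_cases h0 : a0 ∈ D
  · calc ∑ s, ν s * menuMix a0 (Ranking.extend s) (retentionRatio a0 ρ) D a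
        = retentionRatio a0 ρ D a * ∑ s, ν s *
            if (Ranking.extend s).best (D.erase a0) ⟨a, ha⟩ = a then 1 else 0 := by
          rw [mul_sum]
          refine sum_congr rfl fun s _ => ?_
          rw [menuMix_apply hD, if_pos h0, if_neg ha0, hbest]
          by_cases h : (Ranking.extend s).best (D.erase a0) ⟨a, ha⟩ = a
          · rw [if_pos h.symm, if_pos h, h]
            ring
          · rw [if_neg (Ne.symm h), if_neg h]
            ring
      _ = ρ D a := by rw [← hprob, retentionRatio_mul hρ hLM ha]
  · calc ∑ s, ν s * menuMix a0 (Ranking.extend s) (retentionRatio a0 ρ) D a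
        = ∑ s, ν s * if (Ranking.extend s).best (D.erase a0) ⟨a, ha⟩ = a then 1 else 0 := by
          refine sum_congr rfl fun s _ => ?_
          rw [menuMix_apply hD, if_neg h0, hbest]
          exact congrArg _ (if_congr eq_comm rfl rfl)
      _ = ρ D a := by rw [← hprob, erase_eq_of_notMem h0]

theorem sum_smul_menuMix_extend (hρ : IsSCF (fullDomain A) ρ)
    (hLM : LimitedMono a0 {a0}ᶜ (fullDomain A) ρ) {ν : Ranking {c // c ∈ ({a0}ᶜ : Finset A)} → ℝ}
    (hν : IsDistr ν) (hνρ : ∀ B ∈ fullDomain A, B ⊆ {a0}ᶜ → ∀ a (ha : a ∈ B),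
      ρ B a = probOf ν fun s => (Ranking.extend s).best B ⟨a, ha⟩ = a)
    {D : Finset A} (hD : D ∈ fullDomain A) :
    (∑ s, ν s • menuMix a0 (Ranking.extend s) (retentionRatio a0 ρ)) D = ρ D := by
  rw [Finset.sum_apply]
  refine eq_of_sum_eq_of_eqOn_erase (s := D) (i := a0) (fun a ha => ?_) (hρ D hD).2.2 ?_
    fun a ha => ?_
  · simp [Finset.sum_apply, menuMix_eq_zero_of_notMem ha]
  · simp only [Finset.sum_apply, Pi.smul_apply, smul_eq_mul]
    rw [sum_comm]
    simp [← mul_sum, sum_menuMix (mem_fullDomain.1 hD), hν.2, (hρ D hD).2.1]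
  · simpa [Finset.sum_apply] using sum_mul_menuMix_extend_of_mem_erase hρ hLM hνρ ha

theorem restrictTo_mem_convexHull_of_limitedMono (hρ : IsSCF (fullDomain A) ρ)
    (hLM : LimitedMono a0 {a0}ᶜ (fullDomain A) ρ)
    (hPRU : PartialRURational {a0}ᶜ (fullDomain A) ρ) :
    restrictTo (fullDomain A) ρ ∈ convexHull ℝ (menuEffectVertices a0 (fullDomain A)) := by
  obtain ⟨ν, hν, hνρ⟩ := hPRU.exists_probOf_best_extend
  have hmix : restrictTo (fullDomain A) ρ = ∑ s, ν s •
      restrictTo (fullDomain A) (menuMix a0 (Ranking.extend s) (retentionRatio a0 ρ)) := by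
    rw [restrictTo_congr fun D hD => (sum_smul_menuMix_extend hρ hLM hν hνρ hD).symm]
    simp only [← restrictToLinearMap_apply, map_sum, map_smul]
  rw [hmix]
  exact (convex_convexHull ℝ _).sum_mem (fun s _ => hν.1 s) hν.2 fun s _ =>
    restrictTo_menuMix_mem_convexHull _ fun _ _ hb hb0 => retentionRatio_mem_Icc hρ hLM hb hb0

end Representation

end ChoiceFunctions

/-- **Corollary A.1**: on the full domain, `ρ` satisfies Limited Monotonicity and partial
RU-rationality iff it lies in the convex hull of the deterministic menu-effect choice
functions `ρ^≻_𝓔`. -/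
theorem stmt19 {A : Type} [Fintype A] [DecidableEq A] (a0 : A)
    (ρ : Finset A → A → ℝ) (hρ : IsSCF (fullDomain A) ρ) :
    (LimitedMono a0 ({a0}ᶜ : Finset A) (fullDomain A) ρ ∧
      PartialRURational ({a0}ᶜ : Finset A) (fullDomain A) ρ) ↔
    restrictTo (fullDomain A) ρ ∈ convexHull ℝ
      {q : Finset A × A → ℝ | ∃ r : Ranking A, ∃ E : Finset (Finset A),
        E ⊆ fullDomain A ∧ q = restrictTo (fullDomain A) (vertexSCF a0 r E)} :=
  ⟨fun ⟨hLM, hPRU⟩ => restrictTo_mem_convexHull_of_limitedMono hρ hLM hPRU,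
    limitedMono_and_partialRURational_of_mem_convexHull (by simp)⟩
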